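/- For every n ≥ 0, the full convolution including k = 0 satisfies Σ_{k=0}^{n} L_k · F_{n-k} = (n+1)·F_n, where F_0 = 0 and L_0 = 2. -/

import Mathlib

/-!
Convolving any sequence `a` with the Fibonacci numbers turns the Fibonacci recurrence into
`S (n + 2) = S (n + 1) + S n + a (n + 1)`, the extra term coming from `F_1 = 1`. For `a = L`, since
`L (n + 1) = F n + F (n + 2)`, the sequence `(n + 1) F n` satisfies the same recurrence with the same
initial values.
-/

def L : ℕ → ℕ
  | 0 => 2
  | 1 => 1
  | (n+2) => L (n+1) + L n

open Finset

theorem L_succ_eq_fib_add_fib (n : ℕ) : L (n + 1) = Nat.fib n + Nat.fib (n + 2) := by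
  induction n using Nat.twoStepInduction with
  | zero => rfl
  | one => rfl
  | more n ih₁ ih₂ =>
    rw [L, ih₁, ih₂, Nat.fib_add_two (n := n + 2), Nat.fib_add_two (n := n + 1),
      Nat.fib_add_two (n := n)]
    ring

section FibConv

variable {R : Type*} [Semiring R]

def fibConv (a : ℕ → R) (n : ℕ) : R := ∑ k ∈ range (n + 1), a k * Nat.fib (n - k)

theorem fibConv_add_two (a : ℕ → R) (n : ℕ) :
    fibConv a (n + 2) = fibConv a (n + 1) + fibConv a n + a (n + 1) := by
  have hsplit : ∀ k ∈ range (n + 1),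
      a k * Nat.fib (n + 2 - k) = a k * Nat.fib (n + 1 - k) + a k * Nat.fib (n - k) := by
    intro k hk
    rw [show n + 2 - k = n - k + 2 by grind, show n + 1 - k = n - k + 1 by grind,
      Nat.fib_add_two, Nat.cast_add, mul_add, add_comm]
  simp only [fibConv, sum_range_succ _ (n + 2), sum_range_succ _ (n + 1), sum_congr rfl hsplit,
    sum_add_distrib]
  simp

end FibConv

theorem stmt12 (n : ℕ) :
    ∑ k ∈ Finset.range (n + 1), L k * Nat.fib (n - k) = (n + 1) * Nat.fib n := by
  change fibConv L n = _
  induction n using Nat.twoStepInduction with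
  | zero => rfl
  | one => rfl
  | more n ih₁ ih₂ =>
    rw [fibConv_add_two, ih₁, ih₂, L_succ_eq_fib_add_fib, Nat.fib_add_two (n := n)]
    ring
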